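/- Let f : A → A' be a monoidal functor between categorical groups, and let α, α' : x → y be parallel morphisms in A with deviation β ∈ π₁(A), i.e. ρ(y)∘(α+β) = α'∘ρ(x). Then the deviation of f(α) and f(α') in A' is f_#(β), i.e. ρ(f(y)) ∘ (f(α) + f_#(β)) = f(α') ∘ ρ(f(x)). -/

import Mathlib

open CategoryTheory MonoidalCategory CategoryTheory.Functor

universe v u

/-- A categorical group: a monoidal groupoid in which every object has a weak inverse. -/
class CategoricalGroup (A : Type u) [Groupoid.{v} A] [MonoidalCategory A] where
  neg : A → A
  iota : ∀ a : A, neg a ⊗ a ≅ 𝟙_ A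

/-- `β ∈ π₁` is the deviation of the parallel morphisms `α, α' : x ⟶ y`:
`ρ(y) ∘ (α + β) = α' ∘ ρ(x)`. -/
def IsDeviation {A : Type u} [Category.{v} A] [MonoidalCategory A]
    {x y : A} (α α' : x ⟶ y) (β : 𝟙_ A ⟶ 𝟙_ A) : Prop :=
  (α ⊗ₘ β) ≫ (ρ_ y).hom = (ρ_ x).hom ≫ α'

/-- The map `f_#` induced on `π₁` by a monoidal functor, sending `β : 0 → 0` to
`f₀⁻¹ ∘ f(β) ∘ f₀` (diagrammatic order). -/
def piOneMap {A A' : Type u} [Category.{v} A] [MonoidalCategory A]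
    [Category.{v} A'] [MonoidalCategory A']
    (F : A ⥤ A') [F.Monoidal] : (𝟙_ A ⟶ 𝟙_ A) → (𝟙_ A' ⟶ 𝟙_ A') :=
  fun β => LaxMonoidal.ε F ≫ F.map β ≫ (Monoidal.εIso F).inv

abbrev rightUnitorConj {C : Type*} [Category C] [MonoidalCategory C] (y : C)
    (β : 𝟙_ C ⟶ 𝟙_ C) : y ⟶ y :=
  (ρ_ y).inv ≫ y ◁ β ≫ (ρ_ y).hom

theorem isDeviation_iff {C : Type*} [Category C] [MonoidalCategory C] {x y : C}
    (α α' : x ⟶ y) (β : 𝟙_ C ⟶ 𝟙_ C) :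
    IsDeviation α α' β ↔ α ≫ rightUnitorConj y β = α' := by
  rw [IsDeviation, MonoidalCategory.tensorHom_def, MonoidalCategory.whiskerRight_id,
    ← cancel_epi (ρ_ x).hom]
  simp

theorem map_rightUnitorConj {C D : Type u} [Category.{v} C] [MonoidalCategory C]
    [Category.{v} D] [MonoidalCategory D] (F : C ⥤ D) [F.Monoidal]
    (y : C) (β : 𝟙_ C ⟶ 𝟙_ C) :
    F.map (rightUnitorConj y β) = rightUnitorConj (F.obj y) (piOneMap F β) := by
  simp only [rightUnitorConj, piOneMap, F.map_comp, Monoidal.map_rightUnitor_inv,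
    Monoidal.map_whiskerLeft, Monoidal.map_rightUnitor, Category.assoc, Monoidal.μ_δ_assoc,
    Monoidal.εIso_inv, MonoidalCategory.whiskerLeft_comp]

theorem deviation_map_general
    {A A' : Type u} [Groupoid.{v} A] [MonoidalCategory A]
    [Groupoid.{v} A'] [MonoidalCategory A']
    (F : A ⥤ A') [F.Monoidal]
    {x y : A} (α α' : x ⟶ y) (β : 𝟙_ A ⟶ 𝟙_ A)
    (h : IsDeviation α α' β) :
    IsDeviation (F.map α) (F.map α') (piOneMap F β) := by
  rw [isDeviation_iff] at h ⊢
  rw [← h, F.map_comp, map_rightUnitorConj]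

/-- If `α, α' : x ⟶ y` are parallel morphisms in a categorical group with
deviation `β`, then for any monoidal functor `f` between categorical groups,
the deviation of `f(α)` and `f(α')` is `f_#(β)`. -/
theorem deviation_map
    {A A' : Type u} [Groupoid.{v} A] [MonoidalCategory A] [CategoricalGroup A]
    [Groupoid.{v} A'] [MonoidalCategory A'] [CategoricalGroup A']
    (F : A ⥤ A') [F.Monoidal]
    {x y : A} (α α' : x ⟶ y) (β : 𝟙_ A ⟶ 𝟙_ A)
    (h : IsDeviation α α' β) :
    IsDeviation (F.map α) (F.map α') (piOneMap F β) :=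
  deviation_map_general F α α' β h
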